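/- The operators t_m = q^{-m₁m₂/2}(v_{ra})^{m₁} z^{m₂} for m = (m₁,m₂) ∈ (ℕ*)² satisfy the W_∞ commutation relation [t_m, t_n] = 2i·sin(π(m₁n₂ - m₂n₁)/(2j+1))·t_{m+n}. -/
import Mathlib


open Complex Finset Matrix

/-- The unitary cyclic shift `v_{ra}` on `ℂ^d` (`d = 2j+1`, basis `|k⟩ = |j, k-j⟩`):
`v_{ra}|j,m⟩ = q^{(j-m)a}|j,m+1⟩` for `m < j` and `v_{ra}|j,j⟩ = e^{2πijr}|j,-j⟩`,
where `q^x = exp(2πix/d)` and `j = (d-1)/2`. -/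
noncomputable def vra (d : ℕ) (a r : ℝ) : Matrix (Fin d) (Fin d) ℂ := fun i l =>
  if (l : ℕ) < d - 1 ∧ (i : ℕ) = (l : ℕ) + 1 then
    Complex.exp (2 * (Real.pi : ℂ) * Complex.I * ((((d : ℝ) - 1 - (l : ℕ)) * a : ℝ) / (d : ℂ)))
  else if (l : ℕ) = d - 1 ∧ (i : ℕ) = 0 then
    Complex.exp (2 * (Real.pi : ℂ) * Complex.I * ((((d : ℝ) - 1) / 2 * r : ℝ)))
  else 0

/-- The diagonal operator `h` with `h|j,m⟩ = √((j+m)(j-m+1))|j,m⟩`, i.e.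
`h|k⟩ = √(k(d-k))|k⟩` in the shifted indexing `k = j+m = 0,…,d-1`. -/
noncomputable def hmat (d : ℕ) : Matrix (Fin d) (Fin d) ℂ :=
  Matrix.diagonal fun k => ((Real.sqrt ((k : ℕ) * ((d : ℝ) - (k : ℕ))) : ℝ) : ℂ)

/-- The diagonal operator `z` with `z|j,m⟩ = q^{j-m}|j,m⟩`, i.e. `z|k⟩ = q^{d-1-k}|k⟩`. -/
noncomputable def zmat (d : ℕ) : Matrix (Fin d) (Fin d) ℂ :=
  Matrix.diagonal fun k =>
    Complex.exp (2 * (Real.pi : ℂ) * Complex.I * ((((d : ℝ) - 1 - (k : ℕ)) : ℝ) / (d : ℂ)))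

/-- The operator `t_m = q^{-m₁m₂/2} (v_{ra})^{m₁} z^{m₂}`, with `q^{1/2} = exp(πi/d)`. -/
noncomputable def tOp (d : ℕ) (a r : ℝ) (m : ℕ × ℕ) : Matrix (Fin d) (Fin d) ℂ :=
  Complex.exp (-(Real.pi : ℂ) * Complex.I * (((m.1 * m.2 : ℕ) : ℂ) / (d : ℂ))) •
    ((vra d a r) ^ m.1 * (zmat d) ^ m.2)

lemma comm1 (d : ℕ) (hd : 2 ≤ d) (a r : ℝ) :
    zmat d * vra d a r =
      Complex.exp (-(2 * (Real.pi : ℂ) * Complex.I) / d) • (vra d a r * zmat d) := by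
  have hD : (d : ℂ) ≠ 0 := Nat.cast_ne_zero.mpr (by omega)
  ext i l
  simp only [zmat, vra, Matrix.diagonal_mul, Matrix.mul_diagonal, Matrix.smul_apply,
    smul_eq_mul]
  by_cases h1 : (l : ℕ) < d - 1 ∧ (i : ℕ) = (l : ℕ) + 1
  · rw [if_pos h1]
    rw [← Complex.exp_add, ← Complex.exp_add, ← Complex.exp_add]
    congr 1
    have hi : ((i : ℕ) : ℂ) = ((l : ℕ) : ℂ) + 1 := by exact_mod_cast congrArg Nat.cast h1.2
    push_cast
    rw [hi]
    field_simp
    ring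
  · rw [if_neg h1]
    by_cases h2 : (l : ℕ) = d - 1 ∧ (i : ℕ) = 0
    · rw [if_pos h2]
      rw [← Complex.exp_add, ← Complex.exp_add, ← Complex.exp_add]
      have hl : ((l : ℕ) : ℂ) = (d : ℂ) - 1 := by
        rw [h2.1]; push_cast [Nat.cast_sub (by omega : 1 ≤ d)]; ring
      have hi : ((i : ℕ) : ℂ) = 0 := by exact_mod_cast congrArg Nat.cast h2.2
      have key : 2 * (Real.pi : ℂ) * Complex.I *
            ((((d : ℝ) - 1 - (i : ℕ)) : ℝ) / (d : ℂ)) +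
            2 * (Real.pi : ℂ) * Complex.I * ((((d : ℝ) - 1) / 2 * r : ℝ)) =
          (2 * (Real.pi : ℂ) * Complex.I) + (-(2 * (Real.pi : ℂ) * Complex.I) / d +
            (2 * (Real.pi : ℂ) * Complex.I * ((((d : ℝ) - 1) / 2 * r : ℝ)) +
            2 * (Real.pi : ℂ) * Complex.I * ((((d : ℝ) - 1 - (l : ℕ)) : ℝ) / (d : ℂ)))) := by
        push_cast
        rw [hi, hl]
        field_simp
        ring
      rw [key, Complex.exp_add, Complex.exp_two_pi_mul_I, one_mul, Complex.exp_add,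
        Complex.exp_add]
    · rw [if_neg h2]; ring

lemma commPow (d : ℕ) (hd : 2 ≤ d) (a r : ℝ) (b : ℕ) :
    zmat d ^ b * vra d a r =
      Complex.exp (-(2 * (Real.pi : ℂ) * Complex.I) * b / d) • (vra d a r * zmat d ^ b) := by
  induction b with
  | zero => simp
  | succ b ih =>
    calc zmat d ^ (b + 1) * vra d a r = zmat d * (zmat d ^ b * vra d a r) := by
          rw [pow_succ', mul_assoc]
      _ = zmat d * (Complex.exp (-(2 * (Real.pi : ℂ) * Complex.I) * b / d) •
            (vra d a r * zmat d ^ b)) := by rw [ih]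
      _ = Complex.exp (-(2 * (Real.pi : ℂ) * Complex.I) * b / d) •
            ((zmat d * vra d a r) * zmat d ^ b) := by
          rw [mul_smul_comm, mul_assoc]
          rw [mul_assoc]
      _ = Complex.exp (-(2 * (Real.pi : ℂ) * Complex.I) * b / d) •
            ((Complex.exp (-(2 * (Real.pi : ℂ) * Complex.I) / d) •
              (vra d a r * zmat d)) * zmat d ^ b) := by rw [comm1 d hd a r]
      _ = (Complex.exp (-(2 * (Real.pi : ℂ) * Complex.I) * b / d) *
            Complex.exp (-(2 * (Real.pi : ℂ) * Complex.I) / d)) •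
            (vra d a r * zmat d ^ (b + 1)) := by
          rw [smul_mul_assoc, smul_smul, pow_succ', ← mul_assoc]
      _ = Complex.exp (-(2 * (Real.pi : ℂ) * Complex.I) * (b + 1 : ℕ) / d) •
            (vra d a r * zmat d ^ (b + 1)) := by
          rw [← Complex.exp_add]
          congr 2
          push_cast
          ring

lemma commPow2 (d : ℕ) (hd : 2 ≤ d) (a r : ℝ) (b c : ℕ) :
    zmat d ^ b * vra d a r ^ c =
      Complex.exp (-(2 * (Real.pi : ℂ) * Complex.I) * (c * b : ℕ) / d) •
        (vra d a r ^ c * zmat d ^ b) := by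
  induction c with
  | zero => simp
  | succ c ih =>
    calc zmat d ^ b * vra d a r ^ (c + 1)
        = (zmat d ^ b * vra d a r ^ c) * vra d a r := by rw [pow_succ, mul_assoc]
      _ = Complex.exp (-(2 * (Real.pi : ℂ) * Complex.I) * (c * b : ℕ) / d) •
            (vra d a r ^ c * (zmat d ^ b * vra d a r)) := by
          rw [ih, smul_mul_assoc, mul_assoc, mul_assoc]
      _ = (Complex.exp (-(2 * (Real.pi : ℂ) * Complex.I) * (c * b : ℕ) / d) *
            Complex.exp (-(2 * (Real.pi : ℂ) * Complex.I) * b / d)) •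
            (vra d a r ^ (c + 1) * zmat d ^ b) := by
          rw [commPow d hd a r b, mul_smul_comm, smul_smul, pow_succ, mul_assoc, mul_assoc]
      _ = Complex.exp (-(2 * (Real.pi : ℂ) * Complex.I) * ((c + 1) * b : ℕ) / d) •
            (vra d a r ^ (c + 1) * zmat d ^ b) := by
          rw [← Complex.exp_add]
          congr 2
          push_cast
          ring

lemma tmul (d : ℕ) (hd : 2 ≤ d) (a r : ℝ) (p q s t : ℕ) :
    (vra d a r ^ p * zmat d ^ q) * (vra d a r ^ s * zmat d ^ t) =
      Complex.exp (-(2 * (Real.pi : ℂ) * Complex.I) * (s * q : ℕ) / d) •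
        (vra d a r ^ (p + s) * zmat d ^ (q + t)) := by
  rw [mul_assoc, ← mul_assoc (zmat d ^ q), commPow2 d hd a r q s, smul_mul_assoc,
    mul_smul_comm]
  congr 1
  rw [pow_add, pow_add]
  noncomm_ring

/-- the operators `t_m` satisfy the `W_∞` commutation relation
`[t_m, t_n] = 2i·sin(π(m∧n)/(2j+1))·t_{m+n}` with `m∧n = m₁n₂ - m₂n₁`. -/
theorem stmt_18 (d : ℕ) (hd : 2 ≤ d) (a : ℕ) (ha : a < d) (r : ℝ) (m n : ℕ × ℕ)
    (hm1 : 1 ≤ m.1) (hm2 : 1 ≤ m.2) (hn1 : 1 ≤ n.1) (hn2 : 1 ≤ n.2) :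
    tOp d a r m * tOp d a r n - tOp d a r n * tOp d a r m =
      (2 * Complex.I *
          (Real.sin (Real.pi * (((m.1 : ℝ) * n.2 - (m.2 : ℝ) * n.1)) / d) : ℝ)) •
        tOp d a r (m.1 + n.1, m.2 + n.2) := by
  have hD : (d : ℂ) ≠ 0 := Nat.cast_ne_zero.mpr (by omega)
  set P := vra d (a : ℝ) r ^ (m.1 + n.1) * zmat d ^ (m.2 + n.2) with hP
  set x : ℂ := ((Real.pi * (((m.1 : ℝ) * n.2 - (m.2 : ℝ) * n.1)) / d : ℝ) : ℂ) with hx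
  have hxc : x = (Real.pi : ℂ) * (((m.1 : ℂ) * n.2 - (m.2 : ℂ) * n.1)) / d := by
    rw [hx]; push_cast; ring
  set c : ℂ := Complex.exp (-(Real.pi : ℂ) * Complex.I *
      ((((m.1 + n.1) * (m.2 + n.2) : ℕ) : ℂ) / (d : ℂ))) with hc
  have e1 : tOp d a r m * tOp d a r n = Complex.exp (x * Complex.I) • (c • P) := by
    unfold tOp
    rw [smul_mul_assoc, mul_smul_comm, smul_smul, tmul d hd, smul_smul, smul_smul]
    congr 1
    rw [← Complex.exp_add, ← Complex.exp_add, ← Complex.exp_add, hxc]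
    congr 1
    push_cast
    field_simp
    ring
  have e2 : tOp d a r n * tOp d a r m = Complex.exp (-x * Complex.I) • (c • P) := by
    unfold tOp
    rw [smul_mul_assoc, mul_smul_comm, smul_smul, tmul d hd, smul_smul, smul_smul]
    rw [show n.1 + m.1 = m.1 + n.1 from by omega, show n.2 + m.2 = m.2 + n.2 from by omega]
    congr 1
    rw [← Complex.exp_add, ← Complex.exp_add, ← Complex.exp_add, hxc]
    congr 1
    push_cast
    field_simp
    ring
  have e3 : tOp d a r (m.1 + n.1, m.2 + n.2) = c • P := rfl
  rw [e1, e2, e3, smul_smul, smul_smul, ← sub_smul, smul_smul]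
  congr 1
  rw [Complex.ofReal_sin, ← hx]
  simp only [Complex.sin]
  linear_combination (Complex.exp (x * Complex.I) - Complex.exp (-x * Complex.I)) * c *
    Complex.I_mul_I
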